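/- In the Connes–Kreimer Hopf algebra of rooted trees, the counterterm map S_R^φ defined by the recursion S_R^φ(T) = −R[φ(T) + ∑_{c admissible} S_R^φ(P^c(T))·φ(R^c(T))] (sum over admissible cuts c of T), with φ a character into a commutative Rota–Baxter algebra (V,R), satisfies: S_R^φ(T) ∈ im(R) for every tree T, and the convolution (S_R^φ ⋆ φ)(T) = S_R^φ(T) + φ(T) + ∑_c S_R^φ(P^c(T))φ(R^c(T)) lies in ker(R) whenever R is the minimal subtraction projection on Laurent series. -/

import Mathlib

/-- The minimal subtraction projection on Laurent series: keep only the terms with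
strictly negative exponent (the pole part). -/
noncomputable def msProj (a : LaurentSeries ℚ) : LaurentSeries ℚ :=
  ⟨fun n => if n < 0 then a.coeff n else 0,
   a.isPWO_support'.mono (by
     intro n hn
     simp only [Function.mem_support] at hn ⊢
     intro h
     simp [h] at hn)⟩

theorem AddMonoidHom.map_neg_map_add_self_eq_zero {G : Type*} [AddCommGroup G] (f : G →+ G)
    (hf : ∀ x, f (f x) = f x) (x : G) : f (-f x + x) = 0 := by
  rw [map_add, map_neg, hf, neg_add_cancel]

@[simp]
lemma msProj_coeff (a : LaurentSeries ℚ) (n : ℤ) :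
    (msProj a).coeff n = if n < 0 then a.coeff n else 0 := rfl

lemma msProj_add (a b : LaurentSeries ℚ) : msProj (a + b) = msProj a + msProj b := by
  ext n
  simp only [msProj_coeff, HahnSeries.coeff_add]
  split_ifs <;> simp

lemma msProj_msProj (a : LaurentSeries ℚ) : msProj (msProj a) = msProj a := by
  ext n
  simp only [msProj_coeff]
  split_ifs <;> rfl

noncomputable def msProjHom : LaurentSeries ℚ →+ LaurentSeries ℚ :=
  AddMonoidHom.mk' msProj msProj_add

lemma msProj_neg (a : LaurentSeries ℚ) : msProj (-a) = -msProj a :=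
  map_neg msProjHom a

lemma msProj_neg_msProj_add_self (a : LaurentSeries ℚ) : msProj (-msProj a + a) = 0 :=
  msProjHom.map_neg_map_add_self_eq_zero msProj_msProj a

/-- In the Connes–Kreimer Hopf algebra of rooted trees, with coproduct
`Δ(T) = T⊗1 + 1⊗T + ∑_c P^c(T) ⊗ R^c(T)` over admissible cuts `c` (here modelled
abstractly: `cuts T` is the finite set of pairs `(P^c(T), R^c(T))`, with `P^c(T)` a
forest, i.e. a multiset of trees), let `φ` be a character into the Rota–Baxter algebra
of Laurent series with minimal-subtraction projection `R = msProj`, extended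
multiplicatively to forests, and let `S` satisfy the counterterm recursion
`S(T) = −R[φ(T) + ∑_c S(P^c(T))·φ(R^c(T))]`.  Then `S(T) ∈ im(R)` for every tree `T`,
and the convolution `(S ⋆ φ)(T) = S(T) + φ(T) + ∑_c S(P^c(T))·φ(R^c(T))` lies in
`ker(R)`. -/
theorem counterterm_in_range_and_renormalized_in_ker
    {Tree : Type} (cuts : Tree → Finset (Multiset Tree × Tree))
    (φ : Tree → LaurentSeries ℚ) (S : Tree → LaurentSeries ℚ)
    (hrec : ∀ T : Tree,
      S T = -msProj (φ T + ∑ c ∈ cuts T, ((c.1.map S).prod) * φ c.2)) :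
    (∀ T : Tree, S T ∈ Set.range msProj) ∧
      (∀ T : Tree,
        msProj (S T + φ T + ∑ c ∈ cuts T, ((c.1.map S).prod) * φ c.2) = 0) := by
  refine ⟨fun T => ⟨-(φ T + ∑ c ∈ cuts T, ((c.1.map S).prod) * φ c.2), ?_⟩, fun T => ?_⟩
  · rw [hrec T, msProj_neg]
  · rw [add_assoc, hrec T]
    exact msProj_neg_msProj_add_self _
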